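/- arXiv:2407.21360 — 2 statements merged into one kernel-verified Lean document; each statement's English description precedes it below -/
import Mathlib

section
/- For every integer n ≥ 2, every 2-colouring of F_{n^2} ⊠ P_n (the strong product of the fan on n^2+1 vertices with the path on n vertices) has a monochromatic component with at least (1/2)·n^2 vertices. Consequently this clustering is Ω(|V(F_{n^2} ⊠ P_n)|^{2/3}). -/
open SimpleGraph

universe u v

/-- The strong product of two simple graphs. -/
def StrongProd {α : Type u} {β : Type v} (G : SimpleGraph α) (H : SimpleGraph β) :
    SimpleGraph (α × β) where
  Adj x y := (x.1 = y.1 ∧ H.Adj x.2 y.2) ∨ (x.2 = y.2 ∧ G.Adj x.1 y.1) ∨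
    (G.Adj x.1 y.1 ∧ H.Adj x.2 y.2)
  symm := by
    constructor
    rintro x y (⟨h1, h2⟩ | ⟨h1, h2⟩ | ⟨h1, h2⟩)
    · exact Or.inl ⟨h1.symm, h2.symm⟩
    · exact Or.inr (Or.inl ⟨h1.symm, h2.symm⟩)
    · exact Or.inr (Or.inr ⟨h1.symm, h2.symm⟩)
  loopless := by
    constructor
    rintro x (⟨h1, h2⟩ | ⟨h1, h2⟩ | ⟨h1, h2⟩)
    · exact h2.ne rfl
    · exact h2.ne rfl
    · exact h1.ne rfl

/-- The fan graph `F_n`: a path on `n` vertices (vertices `1,…,n`) together with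
one dominant vertex (vertex `0`) adjacent to all path vertices. -/
def Fan (n : ℕ) : SimpleGraph (Fin (n + 1)) :=
  SimpleGraph.fromRel (fun u v => u = 0 ∨ u.val + 1 = v.val)

/-- The cone over `m` disjoint copies of `G`: `m` pairwise disjoint copies of `G`
together with one new vertex adjacent to every vertex of every copy. -/
def GraphCone {V : Type u} (m : ℕ) (G : SimpleGraph V) :
    SimpleGraph (Option (Fin m × V)) where
  Adj x y :=
    match x, y with
    | none, none => False
    | none, some _ => True
    | some _, none => True
    | some (i, _u), some (j, _v) => i = j ∧ G.Adj _u _v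
  symm := by
    constructor
    rintro (_ | ⟨i, u⟩) (_ | ⟨j, v⟩) h
    · exact h
    · trivial
    · trivial
    · exact ⟨h.1.symm, h.2.symm⟩
  loopless := by
    constructor
    rintro (_ | ⟨i, u⟩) h
    · exact h
    · exact h.2.ne rfl

/-- `G` has a tree-decomposition of width at most `t`. -/
def TreewidthLE {V : Type u} (G : SimpleGraph V) (t : ℕ) : Prop :=
  ∃ (ι : Type) (T : SimpleGraph ι) (W : ι → Finset V),
    T.IsTree ∧
    (∀ ⦃u v : V⦄, G.Adj u v → ∃ x, u ∈ W x ∧ v ∈ W x) ∧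
    (∀ v : V, (T.induce {x | v ∈ W x}).Connected) ∧
    (∀ x, (W x).card ≤ t + 1)

/-- A set of vertices is monochromatic under a colouring `f`. -/
def IsMonochromatic {V : Type u} {c : ℕ} (f : V → Fin c) (S : Finset V) : Prop :=
  ∀ u ∈ S, ∀ v ∈ S, f u = f v

/-- Every monochromatic component of the colouring `f` of `G` has at most `k` vertices. -/
def ClusterLE {V : Type u} {c : ℕ} (G : SimpleGraph V) (f : V → Fin c) (k : ℕ) : Prop :=
  ∀ S : Finset V, IsMonochromatic f S → (G.induce (S : Set V)).Connected → S.card ≤ k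

/-- Every monochromatic component of the colouring `f` of `G` has at most `b` vertices
(real-valued bound). -/
def ClusterLEReal {V : Type u} {c : ℕ} (G : SimpleGraph V) (f : V → Fin c) (b : ℝ) : Prop :=
  ∀ S : Finset V, IsMonochromatic f S → (G.induce (S : Set V)).Connected → (S.card : ℝ) ≤ b

/-! If two consecutive apex vertices `(0, a)`, `(0, a + 1)` of `F_{n²} ⊠ P_n` have different
colours, every other vertex of the rows `a` and `a + 1` is adjacent to both of them, so one of the
two apexes together with the vertices of its colour among these `2n²` is a monochromatic star on
more than `n²` vertices.

Otherwise the apex column has a single colour `c`, and the whole colour class of `c` is connected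
through it. If that class has fewer than `n²/2` vertices, cut the path of the fan into `n` blocks of
`n` consecutive vertices: some block, a copy of the `n × n` grid `P_n ⊠ P_n`, contains fewer than
`n/2` vertices of colour `c`. That grid has a row and more than `n/2` columns avoiding `c`, and
together they form a connected comb of the other colour on at least `n²/2` vertices. -/

open Finset

namespace SimpleGraph

variable {V W : Type*} {G : SimpleGraph V} {H : SimpleGraph W}

theorem Preconnected.apply_eq_of_forall_adj {α : Type*} (hG : G.Preconnected) {g : V → α}
    (h : ∀ u v, G.Adj u v → g u = g v) (u v : V) : g u = g v := by
  obtain ⟨p⟩ := hG u v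
  induction p with
  | nil => rfl
  | cons hadj _ ih => exact (h _ _ hadj).trans ih

theorem pathGraph_connected_of_pos {n : ℕ} (hn : 0 < n) : (pathGraph n).Connected :=
  haveI : Nonempty (Fin n) := ⟨⟨0, hn⟩⟩
  ⟨pathGraph_preconnected n⟩

theorem induce_image_connected (φ : H →g G) {s : Set W} (hs : (H.induce s).Connected) :
    (G.induce (φ '' s)).Connected :=
  hs.map (G := H.induce s) ⟨fun v => ⟨φ v, Set.mem_image_of_mem φ v.2⟩, fun h => φ.map_adj h⟩
    (by rintro ⟨_, v, hv, rfl⟩; exact ⟨⟨v, hv⟩, rfl⟩)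

theorem induce_range_connected (φ : H →g G) (hH : H.Connected) :
    (G.induce (Set.range φ)).Connected :=
  hH.map ⟨fun v => ⟨φ v, v, rfl⟩, fun h => φ.map_adj h⟩ (by rintro ⟨_, v, rfl⟩; exact ⟨v, rfl⟩)

theorem induce_singleton_connected (v : V) : (G.induce {v}).Connected := by
  rw [connected_iff_exists_forall_reachable]
  exact ⟨⟨v, rfl⟩, fun ⟨w, hw⟩ => by subst hw; rfl⟩

theorem induce_connected_of_patches_meeting {s t : Set V} (hs : (G.induce s).Connected)
    (hst : s ⊆ t)
    (h : ∀ v ∈ t, ∃ t' ⊆ t, v ∈ t' ∧ (s ∩ t').Nonempty ∧ (G.induce t').Connected) :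
    (G.induce t).Connected := by
  obtain ⟨⟨u, hu⟩⟩ := hs.nonempty
  refine induce_connected_of_patches u (hst hu) fun {v} hv => ?_
  obtain ⟨t', ht't, hvt', hst', ht'⟩ := h v hv
  exact ⟨s ∪ t', Set.union_subset hst ht't, Or.inl hu, Or.inr hvt',
    induce_union_connected hs.preconnected ht'.preconnected hst' _ _⟩

theorem induce_connected_of_forall_adj {s : Set V} {v : V} (hv : v ∈ s)
    (h : ∀ w ∈ s, w ≠ v → G.Adj v w) : (G.induce s).Connected := by
  refine induce_connected_of_patches_meeting (induce_singleton_connected v)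
    (Set.singleton_subset_iff.mpr hv) fun w hw => ?_
  by_cases hwv : w = v
  · subst hwv
    exact ⟨{w}, Set.singleton_subset_iff.mpr hw, rfl, ⟨w, rfl, rfl⟩, induce_singleton_connected w⟩
  · exact ⟨{v, w}, Set.insert_subset hv (Set.singleton_subset_iff.mpr hw), by simp,
      ⟨v, rfl, by simp⟩, induce_pair_connected_of_adj (h w hw hwv)⟩

end SimpleGraph

section StrongProd

variable {α α' β β' : Type*} {G : SimpleGraph α} {G' : SimpleGraph α'} {H : SimpleGraph β}
  {H' : SimpleGraph β'}

theorem strongProd_adj_of_adj_left {x y : α × β} (h₁ : G.Adj x.1 y.1)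
    (h₂ : x.2 = y.2 ∨ H.Adj x.2 y.2) : (StrongProd G H).Adj x y := by
  rcases h₂ with h₂ | h₂
  · exact Or.inr (Or.inl ⟨h₂, h₁⟩)
  · exact Or.inr (Or.inr ⟨h₁, h₂⟩)

variable (G H) in
@[simps]
def strongProdLeft (b : β) : G →g StrongProd G H :=
  ⟨fun a => (a, b), fun h => Or.inr (Or.inl ⟨rfl, h⟩)⟩

variable (G H) in
@[simps]
def strongProdRight (a : α) : H →g StrongProd G H :=
  ⟨fun b => (a, b), fun h => Or.inl ⟨rfl, h⟩⟩

def strongProdMap (φ : G →g G') (ψ : H →g H') : StrongProd G H →g StrongProd G' H' where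
  toFun := Prod.map φ ψ
  map_rel' := by
    rintro x y (⟨h₁, h₂⟩ | ⟨h₁, h₂⟩ | ⟨h₁, h₂⟩)
    · exact Or.inl ⟨congrArg φ h₁, ψ.map_adj h₂⟩
    · exact Or.inr (Or.inl ⟨congrArg ψ h₁, φ.map_adj h₂⟩)
    · exact Or.inr (Or.inr ⟨φ.map_adj h₁, ψ.map_adj h₂⟩)

@[simp]
theorem strongProdMap_apply (φ : G →g G') (ψ : H →g H') (x : α × β) :
    strongProdMap φ ψ x = (φ x.1, ψ x.2) := rfl

end StrongProd

theorem fan_adj_zero {m : ℕ} {i : Fin (m + 1)} (hi : i ≠ 0) : (Fan m).Adj 0 i := by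
  simp [Fan, hi.symm]

@[simps]
def fanSuccHom (m : ℕ) : pathGraph m →g Fan m where
  toFun := Fin.succ
  map_rel' {u v} h := by
    rw [pathGraph_adj] at h
    simp only [Fan, SimpleGraph.fromRel_adj, ne_eq, Fin.succ_inj, Fin.succ_ne_zero, false_or,
      Fin.val_succ]
    omega

def pathGraphBlockHom {q w m : ℕ} (h : q * w ≤ m) (k : Fin q) : pathGraph w →g pathGraph m where
  toFun r := Fin.castLE h (finProdFinEquiv (k, r))
  map_rel' {u v} huv := by
    rw [pathGraph_adj] at huv ⊢
    simp only [Fin.val_castLE, finProdFinEquiv_apply_val]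
    omega

theorem pathGraphBlockHom_injective {q w m : ℕ} (h : q * w ≤ m) :
    Function.Injective fun p : Fin q × Fin w => pathGraphBlockHom h p.1 p.2 :=
  (Fin.castLE_injective h).comp finProdFinEquiv.injective

theorem Function.Injective.exists_mul_card_filter_le {ι α β : Type*} [Fintype ι] [Nonempty ι]
    [Fintype α] [Fintype β] {e : ι × α → β} (he : Function.Injective e) (P : β → Prop)
    [DecidablePred P] : ∃ i, Fintype.card ι * #{a | P (e (i, a))} ≤ #{b | P b} := by
  have hsum : ∑ i, #{a | P (e (i, a))} ≤ #{b | P b} :=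
    calc ∑ i, #{a | P (e (i, a))} = #{x | P (e x)} := by
          simp only [card_filter, Fintype.sum_prod_type]
      _ ≤ #{b | P b} := card_le_card_of_injOn e (fun x hx => by simpa using hx) he.injOn
  obtain ⟨i, -, hi⟩ := exists_le_of_sum_le (univ_nonempty (α := ι))
    (f := fun i => Fintype.card ι * #{a | P (e (i, a))}) (g := fun _ => #{b | P b})
    (by simpa [← mul_sum] using Nat.mul_le_mul_left (Fintype.card ι) hsum)
  exact ⟨i, hi⟩

theorem card_le_card_filter_forall_notMem_add_card {α β : Type*} [Fintype α] [Fintype β]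
    [DecidableEq α] [DecidableEq β] (s : Finset (α × β)) :
    Fintype.card α ≤ #{a | ∀ b, (a, b) ∉ s} + #s :=
  calc Fintype.card α = #(univ : Finset α) := card_univ.symm
    _ ≤ #(({a | ∀ b, (a, b) ∉ s} : Finset α) ∪ s.image Prod.fst) := card_le_card fun a _ => by
        by_cases ha : ∀ b, (a, b) ∉ s
        · simp [ha]
        · push Not at ha
          obtain ⟨b, hb⟩ := ha
          exact mem_union_right _ (mem_image.mpr ⟨(a, b), hb, rfl⟩)
    _ ≤ #{a | ∀ b, (a, b) ∉ s} + #s := (card_union_le _ _).trans (by gcongr; exact card_image_le)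

theorem exists_isMonochromatic_comb {w n : ℕ} (hw : 0 < w) (g : Fin w × Fin n → Fin 2)
    (c : Fin 2) (hbad : #{p | g p = c} < n) :
    ∃ S : Finset (Fin w × Fin n), IsMonochromatic g S ∧
      ((StrongProd (pathGraph w) (pathGraph n)).induce (S : Set (Fin w × Fin n))).Connected ∧
      w * n ≤ #S + #{p | g p = c} * n := by
  set bad : Finset (Fin w × Fin n) := {p | g p = c}
  obtain ⟨j₀, -, hj₀⟩ := exists_mem_notMem_of_card_lt_card (s := bad.image Prod.snd) (t := univ)
    (card_image_le.trans_lt (by simpa using hbad))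
  set R : Finset (Fin w) := {r | ∀ j, (r, j) ∉ bad}
  have hR : w ≤ #R + #bad := by
    convert card_le_card_filter_forall_notMem_add_card bad
    simp
  set S := R ×ˢ univ ∪ univ ×ˢ {j₀}
  have hS : ∀ p ∈ S, g p ≠ c := by
    rintro ⟨r, j⟩ hp
    simp only [S, R, bad, mem_union, mem_product, mem_filter, mem_univ, true_and, and_true,
      mem_singleton] at hp
    rcases hp with hr | hj
    · exact hr j
    · exact fun h => hj₀ (mem_image.mpr ⟨(r, j), by simpa [bad] using h, hj⟩)
  have hn : 0 < n := Fin.pos j₀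
  refine ⟨S, fun p hp q hq => ?_, ?_, ?_⟩
  · have := hS p hp; have := hS q hq; omega
  · have hspine : Set.range (strongProdLeft (pathGraph w) (pathGraph n) j₀) ⊆ S := by
      rintro _ ⟨r, rfl⟩
      simp [S]
    refine induce_connected_of_patches_meeting
      (induce_range_connected _ (pathGraph_connected_of_pos hw)) hspine fun ⟨r, j⟩ hv => ?_
    simp only [S, mem_coe, mem_union, mem_product, mem_univ, and_true, true_and,
      mem_singleton] at hv
    rcases hv with hr | rfl
    · refine ⟨Set.range (strongProdRight (pathGraph w) (pathGraph n) r), ?_, ⟨j, rfl⟩,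
        ⟨(r, j₀), ⟨r, rfl⟩, ⟨j₀, rfl⟩⟩, induce_range_connected _ (pathGraph_connected_of_pos hn)⟩
      rintro _ ⟨j', rfl⟩
      simp [S, hr]
    · exact ⟨_, hspine, ⟨r, rfl⟩, ⟨(r, j), ⟨r, rfl⟩, ⟨r, rfl⟩⟩,
        induce_range_connected _ (pathGraph_connected_of_pos hw)⟩
  · calc w * n ≤ (#R + #bad) * n := Nat.mul_le_mul_right n hR
      _ = #(R ×ˢ (univ : Finset (Fin n))) + #bad * n := by simp [add_mul]
      _ ≤ #S + #bad * n := by gcongr; exact subset_union_left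

theorem IsMonochromatic.image {V W : Type*} [DecidableEq W] {c : ℕ} {f : W → Fin c} {φ : V → W}
    {S : Finset V} (hS : IsMonochromatic (f ∘ φ) S) : IsMonochromatic f (S.image φ) := by
  simp only [IsMonochromatic, mem_image, forall_exists_index, and_imp, forall_apply_eq_imp_iff₂]
  exact hS

section FanPath

variable {m n : ℕ}

theorem exists_isMonochromatic_star (f : Fin (m + 1) × Fin n → Fin 2) {a b : Fin n}
    (hab : (pathGraph n).Adj a b) (hf : f (0, a) ≠ f (0, b)) :
    ∃ S : Finset (Fin (m + 1) × Fin n), IsMonochromatic f S ∧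
      ((StrongProd (Fan m) (pathGraph n)).induce (S : Set (Fin (m + 1) × Fin n))).Connected ∧
      m + 1 ≤ #S := by
  set T : Finset (Fin (m + 1) × Fin n) := (univ.erase 0) ×ˢ {a, b}
  have hT : #T = 2 * m := by simp [T, card_pair hab.ne, mul_comm]
  obtain ⟨x, hx, hD⟩ : ∃ x ∈ ({a, b} : Finset (Fin n)), m ≤ #{p ∈ T | f p = f (0, x)} := by
    have hsplit : #T ≤ #{p ∈ T | f p = f (0, a)} + #{p ∈ T | f p = f (0, b)} := by
      refine (card_le_card fun p hp => ?_).trans (card_union_le _ _)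
      have : f p = f (0, a) ∨ f p = f (0, b) := by omega
      simpa [hp] using this
    by_contra! h
    simp only [mem_insert, mem_singleton, forall_eq_or_imp, forall_eq] at h
    omega
  set D := {p ∈ T | f p = f (0, x)}
  have hD0 : ∀ p ∈ D, p.1 ≠ 0 ∧ (p.2 = a ∨ p.2 = b) ∧ f p = f (0, x) := by
    intro p hp
    simpa [D, T, and_assoc] using hp
  refine ⟨insert (0, x) D, ?_, ?_, ?_⟩
  · have hcol : ∀ p ∈ insert (0, x) D, f p = f (0, x) := by
      simp only [mem_insert, forall_eq_or_imp, true_and]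
      exact fun p hp => (hD0 p hp).2.2
    exact fun p hp q hq => (hcol p hp).trans (hcol q hq).symm
  · refine induce_connected_of_forall_adj (mem_insert_self _ _) fun p hp hne => ?_
    obtain ⟨hp0, hpab, -⟩ := hD0 p ((mem_insert.mp hp).resolve_left hne)
    refine strongProd_adj_of_adj_left (fan_adj_zero hp0) ?_
    simp only [mem_insert, mem_singleton] at hx
    rcases hx with rfl | rfl <;> rcases hpab with h | h <;> simp [h, hab, hab.symm]
  · rw [card_insert_of_notMem fun h => (hD0 _ h).1 rfl]
    omega

theorem induce_colourClass_connected (hn : 0 < n) (f : Fin (m + 1) × Fin n → Fin 2) (c : Fin 2)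
    (hc : ∀ j, f (0, j) = c) :
    ((StrongProd (Fan m) (pathGraph n)).induce
      (({p | f p = c} : Finset (Fin (m + 1) × Fin n)) : Set (Fin (m + 1) × Fin n))).Connected := by
  refine induce_connected_of_patches_meeting
    (induce_range_connected (strongProdRight (Fan m) (pathGraph n) 0)
      (pathGraph_connected_of_pos hn))
    (by rintro _ ⟨j, rfl⟩; simp [hc]) fun ⟨i, j⟩ hv => ?_
  have hapex : ((0 : Fin (m + 1)), j) ∈ Set.range (strongProdRight (Fan m) (pathGraph n) 0) :=
    ⟨j, rfl⟩
  refine ⟨{(0, j), (i, j)}, ?_, by simp, ⟨(0, j), hapex, by simp⟩, ?_⟩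
  · simp_all [Set.insert_subset_iff]
  · by_cases hi : i = 0
    · rw [hi, Set.pair_eq_singleton]
      exact induce_singleton_connected _
    · exact induce_pair_connected_of_adj (strongProd_adj_of_adj_left (fan_adj_zero hi) (Or.inl rfl))

end FanPath

theorem exists_isMonochromatic_of_two_mul_card_lt {n : ℕ} (hn : 0 < n)
    (f : Fin (n ^ 2 + 1) × Fin n → Fin 2) (c : Fin 2) (hc : 2 * #{p | f p = c} < n ^ 2) :
    ∃ S : Finset (Fin (n ^ 2 + 1) × Fin n), IsMonochromatic f S ∧
      ((StrongProd (Fan (n ^ 2)) (pathGraph n)).induce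
        (S : Set (Fin (n ^ 2 + 1) × Fin n))).Connected ∧
      n ^ 2 ≤ 2 * #S := by
  set Φ : Fin n →
      StrongProd (pathGraph n) (pathGraph n) →g StrongProd (Fan (n ^ 2)) (pathGraph n) := fun k =>
    strongProdMap ((fanSuccHom _).comp (pathGraphBlockHom (sq n).ge k)) Hom.id
  have hΦ : Function.Injective fun x : Fin n × (Fin n × Fin n) => Φ x.1 x.2 := by
    rintro ⟨k, r, j⟩ ⟨k', r', j'⟩ h
    simp only [Φ, strongProdMap_apply, Prod.mk.injEq, RelHom.comp_apply, fanSuccHom_apply] at h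
    have hkr := pathGraphBlockHom_injective (sq n).ge (a₁ := (k, r)) (a₂ := (k', r'))
      (Fin.succ_injective _ h.1)
    simp_all
  have : Nonempty (Fin n) := ⟨⟨0, hn⟩⟩
  obtain ⟨k, hk⟩ := hΦ.exists_mul_card_filter_le (fun p => f p = c)
  simp only [Fintype.card_fin] at hk
  obtain ⟨S, hmono, hconn, hcard⟩ := exists_isMonochromatic_comb hn (f ∘ Φ k) c (by
    simp only [Function.comp_apply]
    nlinarith)
  refine ⟨S.image (Φ k), hmono.image, ?_, ?_⟩
  · rw [coe_image]
    exact induce_image_connected _ hconn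
  · have hΦk : Function.Injective (Φ k) := fun x y h =>
      congrArg Prod.snd (hΦ (a₁ := (k, x)) (a₂ := (k, y)) h)
    rw [card_image_of_injective _ hΦk]
    simp only [Function.comp_apply] at hcard
    nlinarith

theorem exists_isMonochromatic_two_mul_card_ge {n : ℕ} (hn : 0 < n)
    (f : Fin (n ^ 2 + 1) × Fin n → Fin 2) :
    ∃ S : Finset (Fin (n ^ 2 + 1) × Fin n), IsMonochromatic f S ∧
      ((StrongProd (Fan (n ^ 2)) (pathGraph n)).induce
        (S : Set (Fin (n ^ 2 + 1) × Fin n))).Connected ∧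
      n ^ 2 ≤ 2 * #S := by
  by_cases hapex : ∃ a b : Fin n, (pathGraph n).Adj a b ∧ f (0, a) ≠ f (0, b)
  · obtain ⟨a, b, hab, hf⟩ := hapex
    obtain ⟨S, hmono, hconn, hcard⟩ := exists_isMonochromatic_star f hab hf
    exact ⟨S, hmono, hconn, by omega⟩
  push Not at hapex
  set c := f (0, ⟨0, hn⟩)
  have hc : ∀ j, f (0, j) = c := fun j =>
    (pathGraph_preconnected n).apply_eq_of_forall_adj (g := fun j => f (0, j)) hapex _ _
  by_cases hbig : n ^ 2 ≤ 2 * #{p | f p = c}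
  · refine ⟨_, fun p hp q hq => ?_, induce_colourClass_connected hn f c hc, hbig⟩
    simp_all
  · exact exists_isMonochromatic_of_two_mul_card_lt hn f c (not_le.mp hbig)

/-- For `n ≥ 2`, every 2-colouring of `F_{n²} ⊠ P_n` has a monochromatic component with
at least `n²/2` vertices. -/
theorem two_colour_lower (n : ℕ) (hn : 2 ≤ n) (f : Fin (n ^ 2 + 1) × Fin n → Fin 2) :
    ∃ S : Finset (Fin (n ^ 2 + 1) × Fin n), IsMonochromatic f S ∧
      ((StrongProd (Fan (n ^ 2)) (SimpleGraph.pathGraph n)).induce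
        (S : Set (Fin (n ^ 2 + 1) × Fin n))).Connected ∧
      (n : ℝ) ^ 2 / 2 ≤ (S.card : ℝ) := by
  obtain ⟨S, hmono, hconn, hcard⟩ := exists_isMonochromatic_two_mul_card_ge (by omega) f
  refine ⟨S, hmono, hconn, ?_⟩
  rw [div_le_iff₀ two_pos]
  exact_mod_cast (mul_comm #S 2 ▸ hcard)
end

section
/- For any positive integers c, t ≥ 1 and any graphs H1, H2 each with treewidth at most t, the strong product H1 ⊠ H2 has a c-colouring in which every monochromatic component has at most (t+1)^{2(1 − 1/√c)} · |V(H1 ⊠ H2)|^{1/⌊√c⌋} vertices. -/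
/-
Colour each factor with `s = ⌊√c⌋` colours by peeling off separators: a tree-decomposition of
width `t` yields, for every `m`, a set `X` with `|X| ≤ (t+1)|A|/(m+1)` whose removal leaves
connected pieces of at most `m` vertices (cut at the deepest bag still having more than `m`
vertices below it, then recurse on the rest). Giving the last colour to `A \ X` with
`m ≈ ((t+1)^(s-1)|A|)^(1/s)` and recolouring `X` inductively keeps every monochromatic
component below `((t+1)^(s-1)|A|)^(1/s)`. A monochromatic connected set of `H₁ ⊠ H₂` under
the product colouring projects onto monochromatic connected sets of the factors, so its size
is at most the product of the two bounds.
-/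

open SimpleGraph

universe u v

namespace SimpleGraph

variable {ι : Type*} {T : SimpleGraph ι} {r x y z : ι}

/-- With `T` a tree rooted at `r`: `z` lies in the subtree of `x`. -/
def Dominates (T : SimpleGraph ι) (r x z : ι) : Prop :=
  ∀ w : T.Walk r z, x ∈ w.support

lemma dominates_root (T : SimpleGraph ι) (r z : ι) : T.Dominates r r z :=
  fun w => w.start_mem_support

lemma Dominates.of_walk (h : T.Dominates r x z) (p : T.Walk y z) (hp : x ∉ p.support) :
    T.Dominates r x y := fun w => by
  simpa [Walk.mem_support_append_iff, hp] using h (w.append p)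

lemma Dominates.dist_lt (h : T.Dominates r x z) (hr : T.Reachable r z) (hxz : x ≠ z) :
    T.dist r x < T.dist r z := by
  classical
  obtain ⟨w, hw⟩ := hr.exists_walk_length_eq_dist
  calc T.dist r x ≤ (w.takeUntil x (h w)).length := dist_le _
    _ < w.length := w.length_takeUntil_lt_length (h w) hxz
    _ = T.dist r z := hw

lemma IsAcyclic.dominates_iff (hT : T.IsAcyclic) {p : T.Walk r z} (hp : p.IsPath) :
    T.Dominates r x z ↔ x ∈ p.support := by
  classical
  refine ⟨fun h => h p, fun hx w => w.support_bypass_subset_support ?_⟩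
  have : w.bypass = p := congrArg Subtype.val
    ((hT.subsingleton_path r z).elim ⟨_, w.bypass_isPath⟩ ⟨p, hp⟩)
  rwa [this]

lemma IsAcyclic.eq_of_adj_of_walk (hT : T.IsAcyclic) {y₁ y₂ : ι} (h₁ : T.Adj x y₁)
    (h₂ : T.Adj x y₂) (p : T.Walk y₁ y₂) (hp : x ∉ p.support) : y₁ = y₂ := by
  classical
  have hpath : (Walk.cons h₁ p.bypass).IsPath :=
    Walk.IsPath.cons p.bypass_isPath fun hx => hp (p.support_bypass_subset_support hx)
  simpa using (hT.eq_snd_of_adj_start hpath h₂ (Walk.end_mem_support _)).symm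

lemma IsTree.exists_adj_dominates (hT : T.IsTree) (h : T.Dominates r x z) (hxz : x ≠ z) :
    ∃ y, T.Adj x y ∧ T.Dominates r y z ∧ ∃ q : T.Walk y z, x ∉ q.support := by
  classical
  obtain ⟨p, hp⟩ := hT.connected.exists_isPath r z
  obtain ⟨y, hxy, q, hq⟩ := (p.dropUntil x (h p)).exists_eq_cons_of_ne hxz
  have hdrop := hp.dropUntil (h p)
  rw [hq, Walk.cons_isPath_iff] at hdrop
  refine ⟨y, hxy, (hT.isAcyclic.dominates_iff hp).2 ?_, q, hdrop.2⟩
  exact p.support_dropUntil_subset_support (h p) (by simp [hq])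

lemma IsTree.dominates_of_walk (hT : T.IsTree) (hxy : T.Adj x y) (hx : T.Dominates r x z)
    (hxz : x ≠ z) (p : T.Walk z y) (hp : x ∉ p.support) : T.Dominates r y z := by
  obtain ⟨y', hxy', hy', q, hq⟩ := hT.exists_adj_dominates hx hxz
  obtain rfl := hT.isAcyclic.eq_of_adj_of_walk hxy' hxy (q.append p)
    (by simp [Walk.mem_support_append_iff, hq, hp])
  exact hy'

end SimpleGraph

structure TreeDecomposition {V : Type*} (G : SimpleGraph V) (ι : Type*) where
  tree : SimpleGraph ι
  bag : ι → Finset V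
  isTree : tree.IsTree
  exists_mem_bag_of_adj : ∀ ⦃u v : V⦄, G.Adj u v → ∃ x, u ∈ bag x ∧ v ∈ bag x
  connected_bags : ∀ v : V, (tree.induce {x | v ∈ bag x}).Connected

namespace TreeDecomposition

variable {V ι : Type*} {G : SimpleGraph V} (D : TreeDecomposition G ι)

noncomputable def home (v : V) : ι := (D.connected_bags v).nonempty.some

lemma mem_bag_home (v : V) : v ∈ D.bag (D.home v) := (D.connected_bags v).nonempty.some.2

lemma exists_walk_avoiding_of_mem_bag {v : V} {x a b : ι} (hv : v ∉ D.bag x)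
    (ha : v ∈ D.bag a) (hb : v ∈ D.bag b) : ∃ p : D.tree.Walk a b, x ∉ p.support := by
  obtain ⟨q⟩ := (D.connected_bags v).preconnected ⟨a, ha⟩ ⟨b, hb⟩
  refine ⟨q.map (Embedding.induce _).toHom, fun hx => ?_⟩
  obtain ⟨y, -, rfl⟩ := List.mem_map.1 (Walk.support_map _ q ▸ hx)
  exact hv y.2

lemma exists_walk_avoiding {S : Finset V} {x : ι} (hS : (G.induce (S : Set V)).Connected)
    (hSx : Disjoint S (D.bag x)) {u v : V} (hu : u ∈ S) (hv : v ∈ S) {a b : ι}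
    (ha : u ∈ D.bag a) (hb : v ∈ D.bag b) : ∃ p : D.tree.Walk a b, x ∉ p.support := by
  classical
  suffices ∀ {u' v' : (S : Set V)} (q : (G.induce (S : Set V)).Walk u' v') {a : ι},
      u'.1 ∈ D.bag a → v'.1 ∈ D.bag b → ∃ p : D.tree.Walk a b, x ∉ p.support from
    this (hS.preconnected ⟨u, hu⟩ ⟨v, hv⟩).some ha hb
  intro u' v' q
  induction q with
  | nil => exact D.exists_walk_avoiding_of_mem_bag (Finset.disjoint_left.1 hSx (Subtype.prop _))
  | cons huw _ ih =>
    intro a ha hb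
    obtain ⟨c, hc, hc'⟩ := D.exists_mem_bag_of_adj huw
    obtain ⟨p₁, hp₁⟩ :=
      D.exists_walk_avoiding_of_mem_bag (Finset.disjoint_left.1 hSx (Subtype.prop _)) ha hc
    obtain ⟨p₂, hp₂⟩ := ih hc' hb
    exact ⟨p₁.append p₂, by simp [Walk.mem_support_append_iff, hp₁, hp₂]⟩

variable {S : Finset V} {x r : ι} {u v : V}

lemma home_ne (hSx : Disjoint S (D.bag x)) (hv : v ∈ S) : D.home v ≠ x :=
  fun h => Finset.disjoint_left.1 hSx hv (h ▸ D.mem_bag_home v)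

lemma dominates_home_of_connected (hS : (G.induce (S : Set V)).Connected)
    (hSx : Disjoint S (D.bag x)) (hu : u ∈ S) (hv : v ∈ S)
    (h : D.tree.Dominates r x (D.home u)) : D.tree.Dominates r x (D.home v) :=
  let ⟨p, hp⟩ := D.exists_walk_avoiding hS hSx hv hu (D.mem_bag_home v) (D.mem_bag_home u)
  h.of_walk p hp

lemma exists_dominates_homes (hS : (G.induce (S : Set V)).Connected)
    (hSx : Disjoint S (D.bag x)) (hu : u ∈ S) (h : D.tree.Dominates r x (D.home u)) :
    ∃ y, D.tree.Dominates r x y ∧ y ≠ x ∧ ∀ v ∈ S, D.tree.Dominates r y (D.home v) := by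
  obtain ⟨y, hxy, -, w, hw⟩ := D.isTree.exists_adj_dominates h (D.home_ne hSx hu).symm
  refine ⟨y, h.of_walk w hw, hxy.ne.symm, fun v hv => ?_⟩
  obtain ⟨p, hp⟩ := D.exists_walk_avoiding hS hSx hv hu (D.mem_bag_home v) (D.mem_bag_home u)
  exact D.isTree.dominates_of_walk hxy (D.dominates_home_of_connected hS hSx hu hv h)
    (D.home_ne hSx hv).symm (p.append w.reverse) (by simp [Walk.mem_support_append_iff, hp, hw])

/- A vertex counts as lying below a node when its `home` does. Then only the finitely many
ancestors of homes of vertices of `A` have anything below them, so a deepest node with more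
than `m` vertices of `A` below it exists even if the tree is infinite. -/
lemma exists_bag_cutting_off (m : ℕ) (A : Finset V) (hA : m < A.card) :
    ∃ x, ∃ B ⊆ A, m < B.card ∧ ∀ S ⊆ A, Disjoint S (D.bag x) →
      (G.induce (S : Set V)).Connected → S.card ≤ m ∨ Disjoint S B := by
  classical
  obtain ⟨r⟩ := D.isTree.connected.nonempty
  set B : ι → Finset V := fun x => A.filter fun v => D.tree.Dominates r x (D.home v)
  have hfin : {x | m < (B x).card}.Finite := by
    refine (A.finite_toSet.biUnion fun v _ =>
      (D.isTree.connected r (D.home v)).some.support.finite_toSet).subset fun x hx => ?_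
    obtain ⟨v, hv⟩ := Finset.card_pos.1 (m.zero_le.trans_lt hx)
    rw [Finset.mem_filter] at hv
    exact Set.mem_biUnion hv.1 (hv.2 _)
  have hr : B r = A := Finset.filter_true_of_mem fun v _ => dominates_root _ _ _
  obtain ⟨x, hx, hmax⟩ :=
    Set.exists_max_image _ (D.tree.dist r) hfin ⟨r, show m < (B r).card from hr ▸ hA⟩
  refine ⟨x, B x, Finset.filter_subset _ _, hx, fun S hSA hSx hS => ?_⟩
  refine or_iff_not_imp_right.2 fun hSB => ?_
  obtain ⟨u, hu, huB⟩ := Finset.not_disjoint_iff.1 hSB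
  obtain ⟨y, hxy, hyx, hy⟩ := D.exists_dominates_homes hS hSx hu (Finset.mem_filter.1 huB).2
  have hy_small : ¬ m < (B y).card := fun hy' =>
    (hmax y hy').not_gt (hxy.dist_lt (D.isTree.connected r y) hyx.symm)
  exact (Finset.card_le_card fun v hv => Finset.mem_filter.2 ⟨hSA hv, hy v hv⟩).trans
    (not_lt.1 hy_small)

lemma exists_separator {t : ℕ} (hwidth : ∀ x, (D.bag x).card ≤ t + 1) (m : ℕ) (A : Finset V) :
    ∃ X : Finset V, X.card * (m + 1) ≤ (t + 1) * A.card ∧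
      ∀ S ⊆ A, Disjoint S X → (G.induce (S : Set V)).Connected → S.card ≤ m := by
  classical
  induction A using Finset.strongInduction with
  | H A ih =>
  by_cases hA : A.card ≤ m
  · exact ⟨∅, by simp, fun S hSA _ _ => (Finset.card_le_card hSA).trans hA⟩
  obtain ⟨x, B, hBA, hB, hsplit⟩ := D.exists_bag_cutting_off m A (not_le.1 hA)
  obtain ⟨X, hX, hXsep⟩ := ih (A \ B) (Finset.sdiff_ssubset hBA (Finset.card_pos.1 (by omega)))
  refine ⟨D.bag x ∩ A ∪ X, ?_, fun S hSA hSX hS => ?_⟩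
  · have hAB : (A \ B).card + B.card = A.card := Finset.card_sdiff_add_card_eq_card hBA
    have hbag : (D.bag x ∩ A ∪ X).card ≤ t + 1 + X.card :=
      (Finset.card_union_le _ _).trans (Nat.add_le_add_right
        ((Finset.card_le_card Finset.inter_subset_left).trans (hwidth x)) _)
    nlinarith
  · rw [Finset.disjoint_union_right] at hSX
    have hSx : Disjoint S (D.bag x) := Finset.disjoint_left.2 fun v hv hvx =>
      Finset.disjoint_left.1 hSX.1 hv (Finset.mem_inter.2 ⟨hvx, hSA hv⟩)
    exact (hsplit S hSA hSx hS).elim id fun hSB =>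
      hXsep S (Finset.subset_sdiff.2 ⟨hSA, hSB⟩) hSX.2 hS

end TreeDecomposition

def ClusterLERealOn {V : Type*} {c : ℕ} (G : SimpleGraph V) (f : V → Fin c) (A : Finset V)
    (b : ℝ) : Prop :=
  ∀ S ⊆ A, IsMonochromatic f S → (G.induce (S : Set V)).Connected → (S.card : ℝ) ≤ b

namespace ClusterLERealOn

variable {V : Type*} {G : SimpleGraph V} {X : Finset V} {b : ℝ}

lemma mono {c : ℕ} {f : V → Fin c} {b' : ℝ} (h : ClusterLERealOn G f X b) (hb : b ≤ b') :
    ClusterLERealOn G f X b' :=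
  fun S hSX hS hconn => (h S hSX hS hconn).trans hb

lemma extend_of_separator [DecidableEq V] {k : ℕ} {f : V → Fin (k + 1)}
    (hf : ClusterLERealOn G f X b) {A : Finset V} {m : ℕ}
    (hsep : ∀ S ⊆ A, Disjoint S X → (G.induce (S : Set V)).Connected → S.card ≤ m)
    (hm : (m : ℝ) ≤ b) :
    ClusterLERealOn G (fun v => if v ∈ X then (f v).castSucc else Fin.last (k + 1)) A b := by
  intro S hSA hmono hS
  by_cases hSX : Disjoint S X
  · exact (Nat.cast_le.2 (hsep S hSA hSX hS)).trans hm
  obtain ⟨u, hu, huX⟩ := Finset.not_disjoint_iff.1 hSX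
  have hSX' : S ⊆ X := fun v hv => by
    by_contra hvX
    simpa [huX, hvX, Fin.castSucc_ne_last] using hmono u hu v hv
  refine hf S hSX' (fun u hu v hv => ?_) hS
  simpa [hSX' hu, hSX' hv] using hmono u hu v hv

end ClusterLERealOn

/- `b` is the bound for `k + 2` colours. With threshold `m = ⌊b⌋` the separator `X` has
`|X| ≤ a n / b`, and since `a^k · a n / b = b^(k+1)` the bound for `X` with `k + 1` colours is
again at most `b`. -/
lemma pow_mul_rpow_inv_le {a n x : ℝ} {k m : ℕ} (ha : 0 < a) (hn : 0 ≤ n) (hx : 0 ≤ x)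
    (hm : (a ^ (k + 1) * n) ^ ((k + 2 : ℕ) : ℝ)⁻¹ < m + 1) (hxm : x * (m + 1) ≤ a * n) :
    (a ^ k * x) ^ ((k + 1 : ℕ) : ℝ)⁻¹ ≤ (a ^ (k + 1) * n) ^ ((k + 2 : ℕ) : ℝ)⁻¹ := by
  set b := (a ^ (k + 1) * n) ^ ((k + 2 : ℕ) : ℝ)⁻¹
  have hb0 : 0 ≤ b := by positivity
  have hb : b ^ (k + 2) = a ^ (k + 1) * n := Real.rpow_inv_natCast_pow (by positivity) (by omega)
  have key : a ^ k * x ≤ b ^ (k + 1) := by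
    rcases hb0.eq_or_lt with hb0 | hb0
    · have hn0 : n = 0 := by
        rw [← hb0, zero_pow (by omega)] at hb
        exact (mul_eq_zero.1 hb.symm).resolve_left (by positivity)
      have hx0 : x = 0 := by
        subst hn0
        nlinarith
      simp [hx0, ← hb0]
    · refine le_of_mul_le_mul_right ?_ hb0
      calc a ^ k * x * b ≤ a ^ k * (a * n) := by
            rw [mul_assoc]
            exact mul_le_mul_of_nonneg_left
              ((mul_le_mul_of_nonneg_left hm.le hx).trans hxm) (by positivity)
        _ = b ^ (k + 1) * b := by rw [← pow_succ, hb]; ring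
  calc (a ^ k * x) ^ ((k + 1 : ℕ) : ℝ)⁻¹ ≤ (b ^ (k + 1)) ^ ((k + 1 : ℕ) : ℝ)⁻¹ :=
        Real.rpow_le_rpow (by positivity) key (by positivity)
    _ = b := Real.pow_rpow_inv_natCast hb0 (by omega)

theorem TreeDecomposition.exists_clusterLERealOn {V ι : Type*} {G : SimpleGraph V}
    (D : TreeDecomposition G ι) {t : ℕ} (hwidth : ∀ x, (D.bag x).card ≤ t + 1) (s : ℕ)
    (A : Finset V) : ∃ f : V → Fin (s + 1),
      ClusterLERealOn G f A ((((t : ℝ) + 1) ^ s * A.card) ^ ((s + 1 : ℕ) : ℝ)⁻¹) := by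
  classical
  induction s generalizing A with
  | zero => exact ⟨fun _ => 0, fun S hSA _ _ => by simpa using Finset.card_le_card hSA⟩
  | succ s ih =>
    set b := (((t : ℝ) + 1) ^ (s + 1) * A.card) ^ ((s + 2 : ℕ) : ℝ)⁻¹
    obtain ⟨X, hX, hsep⟩ := D.exists_separator hwidth ⌊b⌋₊ A
    obtain ⟨f, hf⟩ := ih X
    refine ⟨_, (hf.mono ?_).extend_of_separator hsep (Nat.floor_le (by positivity))⟩
    exact pow_mul_rpow_inv_le (by positivity) (Nat.cast_nonneg _) (Nat.cast_nonneg _)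
      (Nat.lt_floor_add_one b) (by exact_mod_cast hX)

theorem TreewidthLE.exists_clusterLEReal {V : Type*} [Fintype V] {G : SimpleGraph V} {t : ℕ}
    (h : TreewidthLE G t) (s : ℕ) : ∃ f : V → Fin (s + 1),
      ClusterLEReal G f ((((t : ℝ) + 1) ^ s * Fintype.card V) ^ ((s + 1 : ℕ) : ℝ)⁻¹) := by
  obtain ⟨ι, T, W, hT, hadj, hconn, hwidth⟩ := h
  obtain ⟨f, hf⟩ :=
    TreeDecomposition.exists_clusterLERealOn ⟨T, W, hT, hadj, hconn⟩ hwidth s Finset.univ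
  exact ⟨f, fun S => hf S (Finset.subset_univ S)⟩

lemma SimpleGraph.Connected.induce_image {V W : Type*} {G : SimpleGraph V} {G' : SimpleGraph W}
    (f : V → W) (hf : ∀ ⦃u v⦄, G.Adj u v → f u = f v ∨ G'.Adj (f u) (f v)) {s : Set V}
    (hs : (G.induce s).Connected) : (G'.induce (f '' s)).Connected := by
  let φ : s → f '' s := fun x => ⟨f x, Set.mem_image_of_mem f x.2⟩
  have hφ : ∀ {a b : s}, (G.induce s).Walk a b → (G'.induce (f '' s)).Reachable (φ a) (φ b) := by
    intro a b q
    induction q with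
    | nil => rfl
    | cons hadj _ ih =>
      exact (hf hadj).elim (fun h => (Subtype.ext h : φ _ = φ _) ▸ ih)
        fun h => (show (G'.induce (f '' s)).Adj (φ _) (φ _) from h).reachable.trans ih
  have := hs.nonempty.map φ
  refine (connected_iff _).2 ⟨?_, inferInstance⟩
  rintro ⟨_, a, ha, rfl⟩ ⟨_, b, hb, rfl⟩
  exact hφ (hs.preconnected ⟨a, ha⟩ ⟨b, hb⟩).some

namespace StrongProd

variable {V₁ V₂ : Type*} {H₁ : SimpleGraph V₁} {H₂ : SimpleGraph V₂} {x y : V₁ × V₂}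

lemma adj_fst (h : (StrongProd H₁ H₂).Adj x y) : x.1 = y.1 ∨ H₁.Adj x.1 y.1 := by
  rcases h with ⟨h, -⟩ | ⟨-, h⟩ | ⟨h, -⟩ <;> simp [h]

lemma adj_snd (h : (StrongProd H₁ H₂).Adj x y) : x.2 = y.2 ∨ H₂.Adj x.2 y.2 := by
  rcases h with ⟨-, h⟩ | ⟨h, -⟩ | ⟨-, h⟩ <;> simp [h]

end StrongProd

namespace ClusterLEReal

variable {V : Type*} {G : SimpleGraph V} {c : ℕ} {f : V → Fin c} {b : ℝ}

lemma mono {b' : ℝ} (h : ClusterLEReal G f b) (hb : b ≤ b') : ClusterLEReal G f b' :=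
  fun S hS hconn => (h S hS hconn).trans hb

lemma comp_injective {c' : ℕ} {e : Fin c → Fin c'} (he : Function.Injective e)
    (h : ClusterLEReal G f b) : ClusterLEReal G (e ∘ f) b :=
  fun S hS hconn => h S (fun u hu v hv => he (hS u hu v hv)) hconn

lemma strongProd {V₁ V₂ : Type*} {H₁ : SimpleGraph V₁} {H₂ : SimpleGraph V₂} {c₁ c₂ : ℕ}
    {f₁ : V₁ → Fin c₁} {f₂ : V₂ → Fin c₂} {b₁ b₂ : ℝ} (h₁ : ClusterLEReal H₁ f₁ b₁)
    (h₂ : ClusterLEReal H₂ f₂ b₂) :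
    ClusterLEReal (StrongProd H₁ H₂) (fun x => finProdFinEquiv (f₁ x.1, f₂ x.2)) (b₁ * b₂) := by
  classical
  intro S hS hconn
  have hS' : ∀ x ∈ S, ∀ y ∈ S, f₁ x.1 = f₁ y.1 ∧ f₂ x.2 = f₂ y.2 := fun x hx y hy =>
    Prod.ext_iff.1 (finProdFinEquiv.injective (hS x hx y hy))
  have hb₁ := h₁ (S.image Prod.fst)
    (by
      simp only [IsMonochromatic, Finset.forall_mem_image]
      exact fun x hx y hy => (hS' x hx y hy).1)
    (by rw [Finset.coe_image]; exact hconn.induce_image _ fun _ _ => StrongProd.adj_fst)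
  have hb₂ := h₂ (S.image Prod.snd)
    (by
      simp only [IsMonochromatic, Finset.forall_mem_image]
      exact fun x hx y hy => (hS' x hx y hy).2)
    (by rw [Finset.coe_image]; exact hconn.induce_image _ fun _ _ => StrongProd.adj_snd)
  calc (S.card : ℝ) ≤ (S.image Prod.fst ×ˢ S.image Prod.snd).card := by
        exact_mod_cast Finset.card_le_card (Finset.subset_product (s := S))
    _ = (S.image Prod.fst).card * (S.image Prod.snd).card := by
        rw [Finset.card_product, Nat.cast_mul]
    _ ≤ b₁ * b₂ := mul_le_mul hb₁ hb₂ (Nat.cast_nonneg _) ((Nat.cast_nonneg _).trans hb₁)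

end ClusterLEReal

lemma rpow_inv_mul_rpow_inv_le {a n₁ n₂ : ℝ} {s c : ℕ} (ha : 1 ≤ a) (hn₁ : 0 ≤ n₁)
    (hn₂ : 0 ≤ n₂) (hsc : (s + 1) ^ 2 ≤ c) :
    (a ^ s * n₁) ^ ((s + 1 : ℕ) : ℝ)⁻¹ * (a ^ s * n₂) ^ ((s + 1 : ℕ) : ℝ)⁻¹ ≤
      a ^ (2 * (1 - 1 / √(c : ℝ))) * (n₁ * n₂) ^ (1 / ((s + 1 : ℕ) : ℝ)) := by
  set k : ℝ := ((s + 1 : ℕ) : ℝ)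
  have hkc : k ≤ √(c : ℝ) := Real.le_sqrt_of_sq_le (by simp only [k]; exact_mod_cast hsc)
  have ha0 : 0 ≤ a := by linarith
  have hpow : (a ^ s) ^ k⁻¹ = a ^ (1 - 1 / k) := by
    rw [← Real.rpow_natCast, ← Real.rpow_mul ha0]
    congr 1
    simp only [k]
    push_cast
    field_simp
    ring
  calc (a ^ s * n₁) ^ k⁻¹ * (a ^ s * n₂) ^ k⁻¹
      = (a ^ s) ^ k⁻¹ * (a ^ s) ^ k⁻¹ * (n₁ * n₂) ^ k⁻¹ := by
        rw [Real.mul_rpow (by positivity) hn₁, Real.mul_rpow (by positivity) hn₂,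
          Real.mul_rpow hn₁ hn₂]
        ring
    _ = a ^ (2 * (1 - 1 / k)) * (n₁ * n₂) ^ (1 / k) := by
        rw [hpow, ← Real.rpow_add (by linarith), one_div k]
        ring_nf
    _ ≤ a ^ (2 * (1 - 1 / √(c : ℝ))) * (n₁ * n₂) ^ (1 / k) := by
        gcongr

theorem general_upper_general (c t : ℕ) (hc : 1 ≤ c) {V₁ V₂ : Type}
    [Fintype V₁] [Fintype V₂] (H₁ : SimpleGraph V₁) (H₂ : SimpleGraph V₂)
    (h₁ : TreewidthLE H₁ t) (h₂ : TreewidthLE H₂ t) :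
    ∃ f : V₁ × V₂ → Fin c, ClusterLEReal (StrongProd H₁ H₂) f
      (((t : ℝ) + 1) ^ ((2 : ℝ) * (1 - 1 / Real.sqrt (c : ℝ))) *
        (Fintype.card (V₁ × V₂) : ℝ) ^ ((1 : ℝ) / (Nat.sqrt c : ℝ))) := by
  obtain ⟨s, hs⟩ := Nat.exists_eq_add_one.2 (Nat.sqrt_pos.2 hc)
  have hsc : (s + 1) ^ 2 ≤ c := hs ▸ Nat.sqrt_le' c
  obtain ⟨f₁, hf₁⟩ := h₁.exists_clusterLEReal s
  obtain ⟨f₂, hf₂⟩ := h₂.exists_clusterLEReal s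
  refine ⟨Fin.castLE (by nlinarith) ∘ fun x => finProdFinEquiv (f₁ x.1, f₂ x.2), ?_⟩
  refine ((hf₁.strongProd hf₂).comp_injective (Fin.castLE_injective _)).mono ?_
  rw [Fintype.card_prod, Nat.cast_mul, hs]
  exact rpow_inv_mul_rpow_inv_le (by simp) (Nat.cast_nonneg _) (Nat.cast_nonneg _) hsc

/-- For graphs `H₁, H₂` of treewidth at most `t`, the strong product has a `c`-colouring
with every monochromatic component of size at most
`(t+1)^{2(1−1/√c)} · |V|^{1/⌊√c⌋}`. -/
theorem general_upper (c t : ℕ) (hc : 1 ≤ c) (ht : 1 ≤ t) {V₁ V₂ : Type}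
    [Fintype V₁] [Fintype V₂] (H₁ : SimpleGraph V₁) (H₂ : SimpleGraph V₂)
    (h₁ : TreewidthLE H₁ t) (h₂ : TreewidthLE H₂ t) :
    ∃ f : V₁ × V₂ → Fin c, ClusterLEReal (StrongProd H₁ H₂) f
      (((t : ℝ) + 1) ^ ((2 : ℝ) * (1 - 1 / Real.sqrt (c : ℝ))) *
        (Fintype.card (V₁ × V₂) : ℝ) ^ ((1 : ℝ) / (Nat.sqrt c : ℝ))) :=
  general_upper_general c t hc H₁ H₂ h₁ h₂
end
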